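/- Stability condition for the Deep-ESN (Theorem 2): fix K ≥ 1, reservoir sizes N⁽¹⁾, …, N⁽ᴷ⁾, encoder sizes M⁽¹⁾, …, M⁽ᴷ⁻¹⁾, and input dimension D. Let W^{res(i)} be an N⁽ⁱ⁾×N⁽ⁱ⁾ real matrix for each i = 1, …, K, let W^{in(1)} be N⁽¹⁾×D, let W^{in(i)} be N⁽ⁱ⁾×M⁽ⁱ⁻¹⁾ for i = 2, …, K, and let W^{enc(j)} be M⁽ʲ⁾×N⁽ʲ⁾ for j = 1, …, K−1 (all with finite, hence bounded, operator norms). Let u : ℕ → ℝ^D be any input sequence. Suppose two families of state sequences x⁽ⁱ⁾, x̃⁽ⁱ⁾ : ℕ → ℝ^{N⁽ⁱ⁾} both satisfy the Deep-ESN recursion with linear encoders: x⁽¹⁾(t+1) = tanh.(W^{res(1)} x⁽¹⁾(t) + W^{in(1)} u(t+1)), and for i = 2, …, K, x⁽ⁱ⁾(t+1) = tanh.(W^{res(i)} x⁽ⁱ⁾(t) + W^{in(i)} W^{enc(i−1)} x⁽ⁱ⁻¹⁾(t+1)) (and likewise for x̃ with the same u). If the largest singular value of W^{res(i)} is strictly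 less than 1 for every i = 1, …, K, then for every i = 1, …, K, ‖x⁽ⁱ⁾(t) − x̃⁽ⁱ⁾(t)‖₂ → 0 as t → ∞. -/

import Mathlib

open Filter Topology

/-- Componentwise hyperbolic tangent on Euclidean space. -/
noncomputable def tanhVec {n : ℕ} (v : EuclideanSpace ℝ (Fin n)) : EuclideanSpace ℝ (Fin n) :=
  WithLp.toLp 2 (fun i => Real.tanh (v i))

/-- The action `x ↦ W x` of a matrix on Euclidean space (equal to `Matrix.mulVec`). -/
noncomputable def mulVecE {m n : ℕ} (W : Matrix (Fin m) (Fin n) ℝ)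
    (x : EuclideanSpace ℝ (Fin n)) : EuclideanSpace ℝ (Fin m) :=
  Matrix.toEuclideanLin W x

/-- The ℓ²-operator norm of a matrix (its largest singular value). -/
noncomputable def opNorm {m n : ℕ} (W : Matrix (Fin m) (Fin n) ℝ) : ℝ :=
  ‖LinearMap.toContinuousLinearMap (Matrix.toEuclideanLin W)‖

/-!
Since `tanh` is 1-Lipschitz, the distance between two trajectories of a reservoir with
`‖W‖ < 1` satisfies `e (t + 1) ≤ ‖W‖ e t + δ (t + 1)`, where `δ` is the distance between
the two inputs; such a perturbed contraction tends to zero as soon as `δ` does. The first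
reservoir sees the same input in both runs, and each further reservoir sees the encoded
states of the previous one, so induction on the layer finishes the proof.
-/

namespace Real

theorem hasDerivAt_tanh (x : ℝ) : HasDerivAt tanh (1 / cosh x ^ 2) x := by
  have h := (hasDerivAt_sinh x).div (hasDerivAt_cosh x) (cosh_pos x).ne'
  rw [← sq, ← sq, cosh_sq_sub_sinh_sq] at h
  exact h.congr_of_eventuallyEq (.of_forall tanh_eq_sinh_div_cosh)

theorem lipschitzWith_tanh : LipschitzWith 1 tanh := by
  refine lipschitzWith_of_nnnorm_deriv_le (fun x => (hasDerivAt_tanh x).differentiableAt)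
    fun x => ?_
  rw [← NNReal.coe_le_coe, coe_nnnorm, (hasDerivAt_tanh x).deriv, norm_of_nonneg (by positivity),
    NNReal.coe_one, div_le_one (by positivity)]
  nlinarith [one_le_cosh x]

end Real

theorem EuclideanSpace.lipschitzWith_map {ι : Type*} [Fintype ι] {f : ℝ → ℝ} {K : NNReal}
    (hf : LipschitzWith K f) :
    LipschitzWith K fun v : EuclideanSpace ℝ ι => WithLp.toLp 2 fun i => f (v i) := by
  refine LipschitzWith.of_dist_le_mul fun v w => ?_
  rw [EuclideanSpace.dist_eq, EuclideanSpace.dist_eq, ← Real.sqrt_sq K.coe_nonneg,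
    ← Real.sqrt_mul (sq_nonneg _), Finset.mul_sum]
  refine Real.sqrt_le_sqrt (Finset.sum_le_sum fun i _ => ?_)
  rw [← mul_pow]
  exact pow_le_pow_left₀ dist_nonneg (hf.dist_le_mul _ _) 2

theorem lipschitzWith_tanhVec {n : ℕ} : LipschitzWith 1 (tanhVec (n := n)) :=
  EuclideanSpace.lipschitzWith_map Real.lipschitzWith_tanh

theorem norm_mulVecE_sub_le {m n : ℕ} (W : Matrix (Fin m) (Fin n) ℝ)
    (a b : EuclideanSpace ℝ (Fin n)) :
    ‖mulVecE W a - mulVecE W b‖ ≤ opNorm W * ‖a - b‖ := by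
  rw [mulVecE, mulVecE, ← map_sub]
  exact (LinearMap.toContinuousLinearMap (Matrix.toEuclideanLin W)).le_opNorm (a - b)

theorem opNorm_nonneg {m n : ℕ} (W : Matrix (Fin m) (Fin n) ℝ) : 0 ≤ opNorm W :=
  norm_nonneg _

theorem norm_tanhVec_mulVecE_add_sub_le {n : ℕ} (W : Matrix (Fin n) (Fin n) ℝ)
    (x x' v v' : EuclideanSpace ℝ (Fin n)) :
    ‖tanhVec (mulVecE W x + v) - tanhVec (mulVecE W x' + v')‖ ≤
      opNorm W * ‖x - x'‖ + ‖v - v'‖ :=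
  calc _ ≤ ‖(mulVecE W x - mulVecE W x') + (v - v')‖ := by
        simpa [dist_eq_norm, add_sub_add_comm] using lipschitzWith_tanhVec.dist_le_mul
          (mulVecE W x + v) (mulVecE W x' + v')
    _ ≤ _ := (norm_add_le _ _).trans (add_le_add_left (norm_mulVecE_sub_le W x x') _)

theorem le_pow_mul_add_of_le_mul_add {a b : ℕ → ℝ} {r c : ℝ} {T : ℕ} (hr0 : 0 ≤ r) (hr1 : r < 1)
    (hc : 0 ≤ c) (hrec : ∀ t, a (t + 1) ≤ r * a t + b (t + 1)) (hb : ∀ t ≥ T, b (t + 1) ≤ c) :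
    ∀ t ≥ T, a t ≤ r ^ (t - T) * a T + c / (1 - r) := by
  have hr1' : 0 < 1 - r := sub_pos.2 hr1
  intro t ht
  induction t, ht using Nat.le_induction with
  | base => simpa using div_nonneg hc hr1'.le
  | succ t ht ih =>
    calc a (t + 1) ≤ r * (r ^ (t - T) * a T + c / (1 - r)) + c :=
          (hrec t).trans (add_le_add (mul_le_mul_of_nonneg_left ih hr0) (hb t ht))
      _ = r ^ (t + 1 - T) * a T + c / (1 - r) := by
          rw [Nat.sub_add_comm ht, pow_succ]
          field_simp
          ring

theorem tendsto_zero_of_le_mul_add {a b : ℕ → ℝ} {r : ℝ} (hr0 : 0 ≤ r) (hr1 : r < 1)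
    (ha : ∀ t, 0 ≤ a t) (hrec : ∀ t, a (t + 1) ≤ r * a t + b (t + 1))
    (hb : Tendsto b atTop (𝓝 0)) : Tendsto a atTop (𝓝 0) := by
  refine tendsto_order.2 ⟨fun e he => .of_forall fun t => he.trans_le (ha t), fun ε hε => ?_⟩
  have hr1' : 0 < 1 - r := sub_pos.2 hr1
  set c := ε / 2 * (1 - r)
  obtain ⟨T, hT⟩ := eventually_atTop.1 (hb.eventually (ge_mem_nhds (by positivity : 0 < c)))
  have hbound := le_pow_mul_add_of_le_mul_add (T := T) hr0 hr1 (by positivity) hrec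
    (fun t ht => hT (t + 1) (by omega))
  have hpow : Tendsto (fun t => r ^ (t - T) * a T) atTop (𝓝 0) := by
    simpa using ((tendsto_pow_atTop_nhds_zero_of_lt_one hr0 hr1).comp
      (tendsto_sub_atTop_nat T)).mul_const (a T)
  filter_upwards [eventually_ge_atTop T, hpow.eventually (gt_mem_nhds (half_pos hε))]
    with t ht hsmall
  calc a t ≤ r ^ (t - T) * a T + c / (1 - r) := hbound t ht
    _ < ε / 2 + ε / 2 := by rw [mul_div_cancel_right₀ _ hr1'.ne']; linarith
    _ = ε := add_halves ε

theorem tendsto_norm_sub_of_reservoir {n : ℕ} {W : Matrix (Fin n) (Fin n) ℝ} (hW : opNorm W < 1)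
    {x x' : ℕ → EuclideanSpace ℝ (Fin n)} (v v' : ℕ → EuclideanSpace ℝ (Fin n))
    (hx : ∀ t, x (t + 1) = tanhVec (mulVecE W (x t) + v (t + 1)))
    (hx' : ∀ t, x' (t + 1) = tanhVec (mulVecE W (x' t) + v' (t + 1)))
    (hv : Tendsto (fun t => ‖v t - v' t‖) atTop (𝓝 0)) :
    Tendsto (fun t => ‖x t - x' t‖) atTop (𝓝 0) :=
  tendsto_zero_of_le_mul_add (opNorm_nonneg W) hW (fun _ => norm_nonneg _)
    (fun t => by rw [hx, hx']; exact norm_tanhVec_mulVecE_add_sub_le W _ _ _ _) hv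

/-- The paper's layers `1, …, K` are indexed `0, …, K-1` here. -/
theorem deep_esn_stability_general (K : ℕ) (D : ℕ)
    (N M : ℕ → ℕ)
    (Wres : ∀ i : ℕ, Matrix (Fin (N i)) (Fin (N i)) ℝ)
    (Win0 : Matrix (Fin (N 0)) (Fin D) ℝ)
    (Win : ∀ i : ℕ, Matrix (Fin (N (i + 1))) (Fin (M i)) ℝ)
    (Wenc : ∀ j : ℕ, Matrix (Fin (M j)) (Fin (N j)) ℝ)
    (u : ℕ → EuclideanSpace ℝ (Fin D))
    (x x' : ∀ i : ℕ, ℕ → EuclideanSpace ℝ (Fin (N i)))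
    (hσ : ∀ i, i < K → opNorm (Wres i) < 1)
    (hx0 : ∀ t, x 0 (t + 1) =
      tanhVec (mulVecE (Wres 0) (x 0 t) + mulVecE Win0 (u (t + 1))))
    (hx'0 : ∀ t, x' 0 (t + 1) =
      tanhVec (mulVecE (Wres 0) (x' 0 t) + mulVecE Win0 (u (t + 1))))
    (hxi : ∀ i, i + 1 < K → ∀ t, x (i + 1) (t + 1) =
      tanhVec (mulVecE (Wres (i + 1)) (x (i + 1) t) +
        mulVecE (Win i) (mulVecE (Wenc i) (x i (t + 1)))))
    (hx'i : ∀ i, i + 1 < K → ∀ t, x' (i + 1) (t + 1) =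
      tanhVec (mulVecE (Wres (i + 1)) (x' (i + 1) t) +
        mulVecE (Win i) (mulVecE (Wenc i) (x' i (t + 1))))) :
    ∀ i, i < K → Tendsto (fun t : ℕ => ‖x i t - x' i t‖) atTop (𝓝 0) := by
  intro i
  induction i with
  | zero =>
    intro h0
    exact tendsto_norm_sub_of_reservoir (hσ 0 h0) (fun t => mulVecE Win0 (u t))
      (fun t => mulVecE Win0 (u t)) hx0 hx'0 (by simp)
  | succ i ih =>
    intro hi
    let v (y : ℕ → EuclideanSpace ℝ (Fin (N i))) t := mulVecE (Win i) (mulVecE (Wenc i) (y t))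
    have hinput : ∀ t, ‖v (x i) t - v (x' i) t‖ ≤
        opNorm (Win i) * opNorm (Wenc i) * ‖x i t - x' i t‖ := fun t =>
      (norm_mulVecE_sub_le _ _ _).trans <| by
        rw [mul_assoc]
        exact mul_le_mul_of_nonneg_left (norm_mulVecE_sub_le _ _ _) (opNorm_nonneg _)
    refine tendsto_norm_sub_of_reservoir (hσ (i + 1) hi) (v (x i)) (v (x' i))
      (hxi i hi) (hx'i i hi) ?_
    exact squeeze_zero (fun _ => norm_nonneg _) hinput
      (by simpa using (ih (by omega)).const_mul (opNorm (Win i) * opNorm (Wenc i)))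

/-- Stability condition for the Deep-ESN (Theorem 2), with layers indexed `0, …, K-1`. -/
theorem deep_esn_stability (K : ℕ) (hK : 1 ≤ K) (D : ℕ)
    (N M : ℕ → ℕ)
    (Wres : ∀ i : ℕ, Matrix (Fin (N i)) (Fin (N i)) ℝ)
    (Win0 : Matrix (Fin (N 0)) (Fin D) ℝ)
    (Win : ∀ i : ℕ, Matrix (Fin (N (i + 1))) (Fin (M i)) ℝ)
    (Wenc : ∀ j : ℕ, Matrix (Fin (M j)) (Fin (N j)) ℝ)
    (u : ℕ → EuclideanSpace ℝ (Fin D))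
    (x x' : ∀ i : ℕ, ℕ → EuclideanSpace ℝ (Fin (N i)))
    (hσ : ∀ i, i < K → opNorm (Wres i) < 1)
    (hx0 : ∀ t, x 0 (t + 1) =
      tanhVec (mulVecE (Wres 0) (x 0 t) + mulVecE Win0 (u (t + 1))))
    (hx'0 : ∀ t, x' 0 (t + 1) =
      tanhVec (mulVecE (Wres 0) (x' 0 t) + mulVecE Win0 (u (t + 1))))
    (hxi : ∀ i, i + 1 < K → ∀ t, x (i + 1) (t + 1) =
      tanhVec (mulVecE (Wres (i + 1)) (x (i + 1) t) +
        mulVecE (Win i) (mulVecE (Wenc i) (x i (t + 1)))))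
    (hx'i : ∀ i, i + 1 < K → ∀ t, x' (i + 1) (t + 1) =
      tanhVec (mulVecE (Wres (i + 1)) (x' (i + 1) t) +
        mulVecE (Win i) (mulVecE (Wenc i) (x' i (t + 1))))) :
    ∀ i, i < K → Tendsto (fun t : ℕ => ‖x i t - x' i t‖) atTop (𝓝 0) :=
  deep_esn_stability_general K D N M Wres Win0 Win Wenc u x x' hσ hx0 hx'0 hxi hx'i
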